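/- The lattice of normal subgroups of ZM(m,n,r) is distributive. -/

import Mathlib

def ZMrels (m n : ℕ) (r : ℤ) : Set (FreeGroup Bool) :=
  {FreeGroup.of true ^ m, FreeGroup.of false ^ n,
   (FreeGroup.of false)⁻¹ * FreeGroup.of true * FreeGroup.of false * (FreeGroup.of true) ^ (-r)}

abbrev ZM (m n : ℕ) (r : ℤ) : Type := PresentedGroup (ZMrels m n r)

def ZMa (m n : ℕ) (r : ℤ) : ZM m n r := PresentedGroup.of true

def ZMb (m n : ℕ) (r : ℤ) : ZM m n r := PresentedGroup.of false

/-!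
Let `A = ⟨a⟩` and `B = ⟨b⟩`. Conjugation by `b` preserves `A`, so `A` is normal and `G = AB`;
the exponent of `b` modulo `n` is a homomorphism killing `A`, so `A ∩ B = 1`.
If `N` is normal and `xy ∈ N` with `x ∈ A`, `y ∈ B`, then the commutator of `xy` with `b` is a
conjugate of `x ^ (r - 1)`, and as `r - 1` is invertible modulo the order of `x`, we get `x ∈ N`.
Hence every normal subgroup is `(N ∩ A)(N ∩ B)`, and `(K ⊔ L) ∩ A = (K ∩ A) ⊔ (L ∩ A)`,
likewise for `B`. This reduces distributivity to the subgroup lattices of the cyclic groups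
`A` and `B`, which are quotients of that of `ℤ`, where it is
`gcd (lcm a b) (lcm a c) = lcm a (gcd b c)`.
-/

theorem Nat.gcd_lcm_lcm (a b c : ℕ) : gcd (lcm a b) (lcm a c) = lcm a (gcd b c) := by
  rcases eq_or_ne a 0 with rfl | ha
  · simp
  rcases eq_or_ne b 0 with rfl | hb
  · simp
  rcases eq_or_ne c 0 with rfl | hc
  · simp
  apply Nat.factorization_inj (Nat.gcd_ne_zero_left (Nat.lcm_ne_zero ha hb))
    (Nat.lcm_ne_zero ha (Nat.gcd_ne_zero_left hb))
  ext p
  simp only [Nat.factorization_gcd (Nat.lcm_ne_zero ha hb) (Nat.lcm_ne_zero ha hc),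
    Nat.factorization_lcm ha hb, Nat.factorization_lcm ha hc,
    Nat.factorization_lcm ha (Nat.gcd_ne_zero_left hb), Nat.factorization_gcd hb hc,
    Finsupp.inf_apply, Finsupp.sup_apply, max_min_distrib_left]

instance : DistribLattice (AddSubgroup ℤ) :=
  DistribLattice.ofInfSupLe fun X Y Z => by
    obtain ⟨x, rfl⟩ := Int.subgroup_cyclic X
    obtain ⟨y, rfl⟩ := Int.subgroup_cyclic Y
    obtain ⟨z, rfl⟩ := Int.subgroup_cyclic Z
    simp only [← AddSubgroup.zmultiples_eq_closure, Int.zmultiples_sup, Int.zmultiples_inf]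
    simp [Int.lcm, Int.gcd, Nat.gcd_lcm_lcm]

instance : DistribLattice (Subgroup (Multiplicative ℤ)) :=
  DistribLattice.ofInfSupLe fun X Y Z => by
    obtain ⟨X, rfl⟩ := AddSubgroup.toSubgroup.surjective X
    obtain ⟨Y, rfl⟩ := AddSubgroup.toSubgroup.surjective Y
    obtain ⟨Z, rfl⟩ := AddSubgroup.toSubgroup.surjective Z
    simp only [← map_inf, ← map_sup, inf_sup_left, le_refl]

open Pointwise

namespace Subgroup

variable {G : Type*} [Group G]

theorem inf_sup_le_of_le_zpowers {c : G} (X : Subgroup G) {Y Z : Subgroup G}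
    (hY : Y ≤ zpowers c) (hZ : Z ≤ zpowers c) : X ⊓ (Y ⊔ Z) ≤ X ⊓ Y ⊔ X ⊓ Z := by
  set f := zpowersHom G c
  rintro g ⟨hgX, hgYZ⟩
  rw [← map_comap_eq_self (f := f) hY, ← map_comap_eq_self (f := f) hZ, ← map_sup] at hgYZ
  obtain ⟨k, hk, rfl⟩ := hgYZ
  have hk' : k ∈ comap f X ⊓ (comap f Y ⊔ comap f Z) := ⟨hgX, hk⟩
  rw [inf_sup_left, ← comap_inf, ← comap_inf] at hk'
  exact comap_sup_comap_le _ _ f hk'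

theorem sup_inf_eq_left_of_disjoint {P Q A B : Subgroup G}
    (hPQ : ((P ⊔ Q : Subgroup G) : Set G) = (P : Set G) * Q) (hP : P ≤ A) (hQ : Q ≤ B)
    (hAB : Disjoint A B) : (P ⊔ Q) ⊓ A = P := by
  refine le_antisymm ?_ (le_inf le_sup_left hP)
  intro g hg
  rw [mem_inf, ← SetLike.mem_coe, hPQ] at hg
  obtain ⟨⟨p, hp, q, hq, rfl⟩, hgA⟩ := hg
  have hqA : q ∈ A := by simpa using A.mul_mem (A.inv_mem (hP hp)) hgA
  simpa [disjoint_def.mp hAB hqA (hQ hq)] using hp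

variable {a b : G} {r : ℤ}

theorem inv_mul_mul_eq_zpow_of_mem_zpowers (h : b⁻¹ * a * b = a ^ r) {x : G}
    (hx : x ∈ zpowers a) : b⁻¹ * x * b = x ^ r := by
  obtain ⟨i, rfl⟩ := mem_zpowers_iff.mp hx
  rw [← zpow_mul, mul_comm, zpow_mul, ← h]
  simpa using (conj_zpow (a := b⁻¹) (b := a) (i := i)).symm

theorem inv_pow_mul_mul_pow_eq_zpow (h : b⁻¹ * a * b = a ^ r) {x : G}
    (hx : x ∈ zpowers a) (j : ℕ) : (b ^ j)⁻¹ * x * b ^ j = x ^ (r ^ j) := by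
  induction j with
  | zero => simp
  | succ j ih =>
    calc (b ^ (j + 1))⁻¹ * x * b ^ (j + 1) = b⁻¹ * ((b ^ j)⁻¹ * x * b ^ j) * b := by group
      _ = x ^ (r ^ (j + 1)) := by
        rw [ih, inv_mul_mul_eq_zpow_of_mem_zpowers h (zpow_mem hx _), ← zpow_mul, pow_succ]

theorem normal_zpowers {n : ℕ} (hn : 0 < n) (hb : b ^ n = 1) (h : b⁻¹ * a * b = a ^ r)
    (hgen : zpowers a ⊔ zpowers b = ⊤) : (zpowers a).Normal := by
  have hb_inv : (b ^ (n - 1))⁻¹ = b := by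
    rw [inv_eq_iff_mul_eq_one, ← pow_succ, Nat.sub_add_cancel hn, hb]
  have hb_mem : b ∈ normalizer (zpowers a : Set G) := by
    refine mem_normalizer_iff.mpr fun x => ⟨fun hx => ?_, fun hx => ?_⟩
    · rw [← hb_inv, inv_inv, inv_pow_mul_mul_pow_eq_zpow h hx]
      exact zpow_mem hx _
    · have hx' := inv_mul_mul_eq_zpow_of_mem_zpowers h hx
      rw [show b⁻¹ * (b * x * b⁻¹) * b = x by group] at hx'
      rw [hx']
      exact zpow_mem hx _
  rw [← normalizer_eq_top_iff, eq_top_iff, ← hgen]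
  exact sup_le le_normalizer (zpowers_le.mpr hb_mem)

theorem mem_of_mul_mem_of_isCoprime {N : Subgroup G} [N.Normal] {x y : G} {m : ℕ}
    (hxm : x ^ m = 1) (hco : IsCoprime (m : ℤ) (r - 1)) (hx : b⁻¹ * x * b = x ^ r)
    (hy : Commute b y) (hxy : x * y ∈ N) : x ∈ N := by
  have hcomm : y * ((x * y)⁻¹ * (b⁻¹ * (x * y) * b)) * y⁻¹ = x ^ (r - 1) := by
    calc y * ((x * y)⁻¹ * (b⁻¹ * (x * y) * b)) * y⁻¹
        = x⁻¹ * (b⁻¹ * x * b) * (b⁻¹ * y * b * y⁻¹) := by group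
      _ = x ^ (r - 1) := by
        rw [hx, show b⁻¹ * y * b = y by rw [mul_assoc, ← hy.eq]; group]
        group
  have hpow : x ^ (r - 1) ∈ N := by
    rw [← hcomm]
    refine Normal.conj_mem inferInstance _ (mul_mem (inv_mem hxy) ?_) y
    simpa using Normal.conj_mem inferInstance _ hxy b⁻¹
  obtain ⟨u, v, huv⟩ := hco
  have hx_eq : x = (x ^ (r - 1)) ^ v := by
    calc x = x ^ (u * m + v * (r - 1)) := by rw [huv, zpow_one]
      _ = (x ^ (r - 1)) ^ v := by
        rw [zpow_add, mul_comm u, zpow_mul, zpow_natCast, hxm, one_zpow, one_mul, mul_comm,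
          zpow_mul]
  rw [hx_eq]
  exact zpow_mem hpow v

theorem eq_inf_zpowers_sup_inf_zpowers {m : ℕ} (ha : a ^ m = 1) (h : b⁻¹ * a * b = a ^ r)
    (hco : IsCoprime (m : ℤ) (r - 1)) [(zpowers a).Normal] (hgen : zpowers a ⊔ zpowers b = ⊤)
    (N : Subgroup G) [N.Normal] : N = N ⊓ zpowers a ⊔ N ⊓ zpowers b := by
  refine le_antisymm (fun g hg => ?_) (sup_le inf_le_left inf_le_left)
  have hg' : g ∈ ((zpowers a ⊔ zpowers b : Subgroup G) : Set G) := by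
    rw [hgen]
    trivial
  rw [normal_mul] at hg'
  obtain ⟨x, hx, y, hy, rfl⟩ := hg'
  have hxm : x ^ m = 1 := by
    obtain ⟨i, rfl⟩ := mem_zpowers_iff.mp hx
    rw [← zpow_natCast, ← zpow_mul, mul_comm, zpow_mul, zpow_natCast, ha, one_zpow]
  have hby : Commute b y := by
    obtain ⟨j, rfl⟩ := mem_zpowers_iff.mp hy
    exact (Commute.refl b).zpow_right j
  have hxN : x ∈ N :=
    mem_of_mul_mem_of_isCoprime hxm hco (inv_mul_mul_eq_zpow_of_mem_zpowers h hx) hby hg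
  have hyN : y ∈ N := by simpa using mul_mem (inv_mem hxN) hg
  exact mul_mem (mem_sup_left ⟨hxN, hx⟩) (mem_sup_right ⟨hyN, hy⟩)

theorem inf_sup_inf_zpowers_le {c : G} {H K L : Subgroup G}
    (h : (K ⊔ L) ⊓ zpowers c = K ⊓ zpowers c ⊔ L ⊓ zpowers c) :
    H ⊓ (K ⊔ L) ⊓ zpowers c ≤ H ⊓ K ⊔ H ⊓ L :=
  calc H ⊓ (K ⊔ L) ⊓ zpowers c = H ⊓ zpowers c ⊓ ((K ⊔ L) ⊓ zpowers c) := by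
        rw [inf_inf_inf_comm, inf_idem]
    _ = H ⊓ zpowers c ⊓ (K ⊓ zpowers c ⊔ L ⊓ zpowers c) := by rw [h]
    _ ≤ H ⊓ zpowers c ⊓ (K ⊓ zpowers c) ⊔ H ⊓ zpowers c ⊓ (L ⊓ zpowers c) :=
        inf_sup_le_of_le_zpowers _ inf_le_right inf_le_right
    _ ≤ H ⊓ K ⊔ H ⊓ L :=
        sup_le_sup (inf_le_inf inf_le_left inf_le_left) (inf_le_inf inf_le_left inf_le_left)

theorem inf_sup_left_of_split [(zpowers a).Normal] (hAB : Disjoint (zpowers a) (zpowers b))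
    (hsplit : ∀ N : Subgroup G, N.Normal → N = N ⊓ zpowers a ⊔ N ⊓ zpowers b)
    {H K L : Subgroup G} [H.Normal] [K.Normal] [L.Normal] :
    H ⊓ (K ⊔ L) = H ⊓ K ⊔ H ⊓ L := by
  set P := K ⊓ zpowers a ⊔ L ⊓ zpowers a
  set Q := K ⊓ zpowers b ⊔ L ⊓ zpowers b
  have hKL : K ⊔ L = P ⊔ Q := by
    calc K ⊔ L = (K ⊓ zpowers a ⊔ K ⊓ zpowers b) ⊔ (L ⊓ zpowers a ⊔ L ⊓ zpowers b) := by
          rw [← hsplit K inferInstance, ← hsplit L inferInstance]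
      _ = P ⊔ Q := sup_sup_sup_comm _ _ _ _
  have hPa : (K ⊔ L) ⊓ zpowers a = P := by
    rw [hKL]
    exact sup_inf_eq_left_of_disjoint (normal_mul P Q) (sup_le inf_le_right inf_le_right)
      (sup_le inf_le_right inf_le_right) hAB
  have hQb : (K ⊔ L) ⊓ zpowers b = Q := by
    rw [hKL, sup_comm]
    exact sup_inf_eq_left_of_disjoint (mul_normal Q P) (sup_le inf_le_right inf_le_right)
      (sup_le inf_le_right inf_le_right) hAB.symm
  refine le_antisymm ?_ le_inf_sup
  rw [hsplit (H ⊓ (K ⊔ L)) inferInstance]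
  exact sup_le (inf_sup_inf_zpowers_le hPa) (inf_sup_inf_zpowers_le hQb)

end Subgroup

namespace ZM

variable {m n : ℕ} {r : ℤ}

open Subgroup

theorem a_pow_eq_one : ZMa m n r ^ m = 1 := by
  rw [ZMa, PresentedGroup.of, ← map_pow]
  exact PresentedGroup.one_of_mem (Or.inl rfl)

theorem b_pow_eq_one : ZMb m n r ^ n = 1 := by
  rw [ZMb, PresentedGroup.of, ← map_pow]
  exact PresentedGroup.one_of_mem (Or.inr (Or.inl rfl))

theorem b_inv_mul_a_mul_b : (ZMb m n r)⁻¹ * ZMa m n r * ZMb m n r = ZMa m n r ^ r := by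
  have h := PresentedGroup.one_of_mem (rels := ZMrels m n r) (Or.inr (Or.inr rfl))
  simp only [map_mul, map_inv, map_zpow] at h
  rw [← mul_inv_eq_one, ← zpow_neg]
  exact h

theorem zpowers_a_sup_zpowers_b : zpowers (ZMa m n r) ⊔ zpowers (ZMb m n r) = ⊤ := by
  rw [eq_top_iff, ← PresentedGroup.closure_range_of, closure_le]
  rintro _ ⟨_ | _, rfl⟩
  · exact mem_sup_right (mem_zpowers _)
  · exact mem_sup_left (mem_zpowers _)

def bExponent (m n : ℕ) (r : ℤ) : ZM m n r →* Multiplicative (ZMod n) :=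
  PresentedGroup.toGroup (f := fun x => cond x 1 (Multiplicative.ofAdd 1)) <| by
    rintro _ (rfl | rfl | rfl) <;> simp [← ofAdd_nsmul]

theorem disjoint_zpowers_a_zpowers_b : Disjoint (zpowers (ZMa m n r)) (zpowers (ZMb m n r)) := by
  rw [disjoint_def]
  intro g hga hgb
  obtain ⟨j, rfl⟩ := mem_zpowers_iff.mp hgb
  obtain ⟨i, hij⟩ := mem_zpowers_iff.mp hga
  have h := congrArg (bExponent m n r) hij
  simp only [bExponent, ZMa, ZMb, map_zpow, PresentedGroup.toGroup.of, cond_true, cond_false,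
    one_zpow, ← ofAdd_zsmul, zsmul_one] at h
  rw [eq_comm, ofAdd_eq_one, ZMod.intCast_zmod_eq_zero_iff_dvd] at h
  obtain ⟨k, rfl⟩ := h
  rw [zpow_mul, zpow_natCast, b_pow_eq_one, one_zpow]

end ZM

theorem stmt11_general (m n : ℕ) (r : ℤ) (hn : 0 < n)
    (hco2 : IsCoprime (m : ℤ) (r - 1)) :
    ∀ H K L : Subgroup (ZM m n r), H.Normal → K.Normal → L.Normal →
      H ⊓ (K ⊔ L) = (H ⊓ K) ⊔ (H ⊓ L) := by
  intro H K L _ _ _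
  have : (Subgroup.zpowers (ZMa m n r)).Normal :=
    Subgroup.normal_zpowers hn ZM.b_pow_eq_one ZM.b_inv_mul_a_mul_b ZM.zpowers_a_sup_zpowers_b
  exact Subgroup.inf_sup_left_of_split ZM.disjoint_zpowers_a_zpowers_b fun N _ =>
    Subgroup.eq_inf_zpowers_sup_inf_zpowers ZM.a_pow_eq_one ZM.b_inv_mul_a_mul_b hco2
      ZM.zpowers_a_sup_zpowers_b N

theorem stmt11 (m n : ℕ) (r : ℤ) (hm : 0 < m) (hn : 0 < n)
    (hco : Nat.Coprime m n) (hco2 : IsCoprime (m : ℤ) (r - 1))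
    (hr : (m : ℤ) ∣ r ^ n - 1) :
    ∀ H K L : Subgroup (ZM m n r), H.Normal → K.Normal → L.Normal →
      H ⊓ (K ⊔ L) = (H ⊓ K) ⊔ (H ⊓ L) :=
  stmt11_general m n r hn hco2
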